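/- arXiv:2307.08404 — 2 statements merged into one kernel-verified Lean document; each statement's English description precedes it below -/
import Mathlib

section
/- For self-adjoint complex n×n matrices H₁,…,H_k (k ≥ 2), reals ε₁,…,ε_{k−1} with |ε_j| ≤ ε̄ and any real t, the bound ‖e^{−i(1+ε₁t)ad H₁}⋯e^{−i(1+ε_{k−1}t)ad H_{k−1}}(H_k) − e^{−i ad H₁}⋯e^{−i ad H_{k−1}}(H_k)‖₂ ≤ Σ_{p=1}^{∞} (ε̄|t|)^p/p! · [‖(ad H_{k−1})^p(H_k)‖₂ + ‖(ad H_{k−2})^p(e^{−i ad H_{k−1}}(H_k))‖₂ + ⋯ + ‖(ad H₁)^p(e^{−i ad H₂}⋯e^{−i ad H_{k−1}}(H_k))‖₂] holds. -/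
open Matrix

attribute [local instance] Matrix.linftyOpNormedAddCommGroup Matrix.linftyOpNormedSpace
  Matrix.linftyOpNormedRing Matrix.linftyOpNormedAlgebra

instance {n : ℕ} : IsTopologicalRing (Matrix (Fin n) (Fin n) ℂ →L[ℂ] Matrix (Fin n) (Fin n) ℂ) :=
  @NonUnitalSeminormedRing.toIsTopologicalRing _
    (ContinuousLinearMap.toNormedRing).toNonUnitalNormedRing.toNonUnitalSeminormedRing

/-- Spectral norm (largest singular value) of a complex square matrix. -/
noncomputable def sN {n : ℕ} (M : Matrix (Fin n) (Fin n) ℂ) : ℝ :=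
  ‖Matrix.toEuclideanCLM (𝕜 := ℂ) M‖

/-- `ad A` as a continuous linear map `X ↦ A*X - X*A`. -/
noncomputable def adC {n : ℕ} (A : Matrix (Fin n) (Fin n) ℂ) :
    Matrix (Fin n) (Fin n) ℂ →L[ℂ] Matrix (Fin n) (Fin n) ℂ :=
  (LinearMap.mulLeft ℂ A - LinearMap.mulRight ℂ A).toContinuousLinearMap

set_option synthInstance.maxHeartbeats 1000000
set_option maxHeartbeats 2000000

namespace StmtFiveAux

open NormedSpace

variable {n : ℕ}

/-- `toEuclideanCLM` as a continuous linear map. -/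
noncomputable def φL (n : ℕ) : Matrix (Fin n) (Fin n) ℂ →L[ℂ]
    (EuclideanSpace ℂ (Fin n) →L[ℂ] EuclideanSpace ℂ (Fin n)) :=
  LinearMap.toContinuousLinearMap
    { toFun := fun M => Matrix.toEuclideanCLM (𝕜 := ℂ) M
      map_add' := fun a b => map_add _ a b
      map_smul' := fun c a => map_smul (Matrix.toEuclideanCLM (𝕜 := ℂ)) c a }

lemma sN_eq (M : Matrix (Fin n) (Fin n) ℂ) : sN M = ‖φL n M‖ := rfl

lemma sN_nonneg (M : Matrix (Fin n) (Fin n) ℂ) : 0 ≤ sN M := norm_nonneg _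

lemma sN_add_le (A B : Matrix (Fin n) (Fin n) ℂ) : sN (A + B) ≤ sN A + sN B := by
  simp only [sN_eq, map_add]; exact norm_add_le _ _

lemma sN_neg (A : Matrix (Fin n) (Fin n) ℂ) : sN (-A) = sN A := by
  simp only [sN_eq, map_neg, norm_neg]

lemma sN_smul (c : ℂ) (A : Matrix (Fin n) (Fin n) ℂ) : sN (c • A) = ‖c‖ * sN A := by
  simp only [sN_eq, _root_.map_smul]; exact norm_smul c ((φL n) A)

lemma sN_mul_le (A B : Matrix (Fin n) (Fin n) ℂ) : sN (A * B) ≤ sN A * sN B := by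
  unfold sN; rw [_root_.map_mul]; exact norm_mul_le _ _

lemma sN_one_le : sN (1 : Matrix (Fin n) (Fin n) ℂ) ≤ 1 := by
  unfold sN; rw [_root_.map_one]
  exact ContinuousLinearMap.norm_id_le

lemma sN_unitary_le (U : Matrix (Fin n) (Fin n) ℂ) (h : Uᴴ * U = 1) : sN U ≤ 1 := by
  have h2 : sN U * sN U ≤ 1 := by
    have : sN U * sN U = sN (Uᴴ * U) := by
      unfold sN
      rw [_root_.map_mul, show Uᴴ = star U from rfl, map_star]
      exact (CStarRing.norm_star_mul_self).symm
    rw [this, h]; exact sN_one_le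
  nlinarith [sN_nonneg U]

noncomputable def mL (A : Matrix (Fin n) (Fin n) ℂ) :
    Matrix (Fin n) (Fin n) ℂ →L[ℂ] Matrix (Fin n) (Fin n) ℂ :=
  (LinearMap.mulLeft ℂ A).toContinuousLinearMap

noncomputable def mR (A : Matrix (Fin n) (Fin n) ℂ) :
    Matrix (Fin n) (Fin n) ℂ →L[ℂ] Matrix (Fin n) (Fin n) ℂ :=
  (LinearMap.mulRight ℂ A).toContinuousLinearMap

lemma mL_apply (A X : Matrix (Fin n) (Fin n) ℂ) : mL A X = A * X := rfl
lemma mR_apply (A X : Matrix (Fin n) (Fin n) ℂ) : mR A X = X * A := rfl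
lemma adC_apply (A X : Matrix (Fin n) (Fin n) ℂ) : adC A X = A * X - X * A := rfl

lemma mL_pow (A : Matrix (Fin n) (Fin n) ℂ) (p : ℕ) : (mL A) ^ p = mL (A ^ p) := by
  induction p with
  | zero => ext X; simp [mL_apply, ContinuousLinearMap.one_apply]
  | succ p ih =>
    ext X
    rw [pow_succ, pow_succ, ContinuousLinearMap.mul_apply, ih, mL_apply, mL_apply, mL_apply,
      mul_assoc]

lemma mR_pow (A : Matrix (Fin n) (Fin n) ℂ) (p : ℕ) : (mR A) ^ p = mR (A ^ p) := by
  induction p with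
  | zero => ext X; simp [mR_apply, ContinuousLinearMap.one_apply]
  | succ p ih =>
    ext X
    rw [pow_succ, ContinuousLinearMap.mul_apply, ih, mR_apply, mR_apply, mR_apply, pow_succ',
      ← mul_assoc]

noncomputable def mLhom (n : ℕ) : Matrix (Fin n) (Fin n) ℂ →L[ℂ]
    (Matrix (Fin n) (Fin n) ℂ →L[ℂ] Matrix (Fin n) (Fin n) ℂ) :=
  LinearMap.toContinuousLinearMap
    { toFun := mL
      map_add' := by
        intro a b; ext X
        simp [mL_apply, ContinuousLinearMap.add_apply, add_mul]
      map_smul' := by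
        intro c a; ext X
        simp [mL_apply, ContinuousLinearMap.smul_apply, smul_mul_assoc] }

noncomputable def mRhom (n : ℕ) : Matrix (Fin n) (Fin n) ℂ →L[ℂ]
    (Matrix (Fin n) (Fin n) ℂ →L[ℂ] Matrix (Fin n) (Fin n) ℂ) :=
  LinearMap.toContinuousLinearMap
    { toFun := mR
      map_add' := by
        intro a b; ext X
        simp [mR_apply, ContinuousLinearMap.add_apply, mul_add]
      map_smul' := by
        intro c a; ext X
        simp [mR_apply, ContinuousLinearMap.smul_apply, mul_smul_comm] }

lemma mLhom_apply (A : Matrix (Fin n) (Fin n) ℂ) : mLhom n A = mL A := rfl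
lemma mRhom_apply (A : Matrix (Fin n) (Fin n) ℂ) : mRhom n A = mR A := rfl

lemma exp_mL (A : Matrix (Fin n) (Fin n) ℂ) : exp (mL A) = mL (exp A) := by
  rw [exp_eq_tsum (𝕂 := ℂ), exp_eq_tsum (𝕂 := ℂ)]
  calc (∑' p : ℕ, (p.factorial : ℂ)⁻¹ • (mL A) ^ p)
      = ∑' p : ℕ, mLhom n ((p.factorial : ℂ)⁻¹ • A ^ p) := by
        refine tsum_congr fun p => ?_
        rw [_root_.map_smul, mLhom_apply, mL_pow]
    _ = mLhom n (∑' p : ℕ, (p.factorial : ℂ)⁻¹ • A ^ p) :=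
        ((mLhom n).map_tsum (expSeries_summable' A)).symm
    _ = mL (∑' p : ℕ, (p.factorial : ℂ)⁻¹ • A ^ p) := rfl

lemma exp_mR (A : Matrix (Fin n) (Fin n) ℂ) : exp (mR A) = mR (exp A) := by
  rw [exp_eq_tsum (𝕂 := ℂ), exp_eq_tsum (𝕂 := ℂ)]
  calc (∑' p : ℕ, (p.factorial : ℂ)⁻¹ • (mR A) ^ p)
      = ∑' p : ℕ, mRhom n ((p.factorial : ℂ)⁻¹ • A ^ p) := by
        refine tsum_congr fun p => ?_
        rw [_root_.map_smul, mRhom_apply, mR_pow]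
    _ = mRhom n (∑' p : ℕ, (p.factorial : ℂ)⁻¹ • A ^ p) :=
        ((mRhom n).map_tsum (expSeries_summable' A)).symm
    _ = mR (∑' p : ℕ, (p.factorial : ℂ)⁻¹ • A ^ p) := rfl

lemma exp_conj_apply (s : ℂ) (A X : Matrix (Fin n) (Fin n) ℂ) :
    exp (s • adC A) X = exp (s • A) * X * exp (-(s • A)) := by
  have h1 : s • adC A = mL (s • A) + mR (-(s • A)) := by
    ext X
    simp only [ContinuousLinearMap.smul_apply, adC_apply, ContinuousLinearMap.add_apply,
      mL_apply, mR_apply, smul_sub]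
    rw [smul_mul_assoc, mul_neg, mul_smul_comm, ← sub_eq_add_neg]
  have hc : mL (s • A) * mR (-(s • A)) = mR (-(s • A)) * mL (s • A) := by
    ext X
    simp only [ContinuousLinearMap.mul_apply, mL_apply, mR_apply, mul_assoc]
  have he : exp (mL (s • A) + mR (-(s • A))) = exp (mL (s • A)) * exp (mR (-(s • A))) := by
      have hCS := FiniteDimensional.complete ℂ (Matrix (Fin n) (Fin n) ℂ →L[ℂ] Matrix (Fin n) (Fin n) ℂ)
      letI : NormedRing (Matrix (Fin n) (Fin n) ℂ →L[ℂ] Matrix (Fin n) (Fin n) ℂ) :=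
        ContinuousLinearMap.toNormedRing
      letI : NormedAlgebra ℂ (Matrix (Fin n) (Fin n) ℂ →L[ℂ] Matrix (Fin n) (Fin n) ℂ) :=
        ContinuousLinearMap.toNormedAlgebra
      letI : NormedAlgebra ℚ (Matrix (Fin n) (Fin n) ℂ →L[ℂ] Matrix (Fin n) (Fin n) ℂ) :=
        NormedAlgebra.restrictScalars ℚ ℂ _
      exact @NormedSpace.exp_add_of_commute _ _ _ (by exact hCS) _ _ hc
  rw [h1, he, ContinuousLinearMap.mul_apply, exp_mL, exp_mR, mL_apply,
    mR_apply, mul_assoc]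

/-- Applying `exp(-(i c) ad A)` for selfadjoint `A` and real `c` does not increase
the spectral norm. -/
lemma sN_exp_conj_le (A : Matrix (Fin n) (Fin n) ℂ) (hA : Aᴴ = A) (c : ℝ)
    (X : Matrix (Fin n) (Fin n) ℂ) :
    sN (exp ((-(Complex.I * c)) • adC A) X) ≤ sN X := by
  set s : ℂ := -(Complex.I * c) with hs
  rw [exp_conj_apply]
  set U := exp (s • A) with hU
  set V := exp (-(s • A)) with hV
  have hconj : (starRingEnd ℂ) s = -s := by
    rw [hs]; simp [Complex.ext_iff]
  have hUH : Uᴴ = V := by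
    rw [hU, hV, ← Matrix.exp_conjTranspose, Matrix.conjTranspose_smul, hA,
      show star s = -s from hconj, neg_smul]
  have hUV : U * V = 1 := by
    rw [hU, hV, ← Matrix.exp_add_of_commute (s • A) _ (Commute.neg_right (Commute.refl _)), add_neg_cancel,
      exp_zero]
  have hVU : V * U = 1 := by
    rw [hU, hV, ← Matrix.exp_add_of_commute _ (s • A) (Commute.neg_left (Commute.refl _)), neg_add_cancel,
      exp_zero]
  have hsU : sN U ≤ 1 := sN_unitary_le U (by rw [hUH, hVU])
  have hsV : sN V ≤ 1 := sN_unitary_le V (by rw [← hUH, Matrix.conjTranspose_conjTranspose, hUH, hUV])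
  have h1 := sN_mul_le (U * X) V
  have h2 := sN_mul_le U X
  nlinarith [sN_nonneg U, sN_nonneg V, sN_nonneg X, sN_nonneg (U * X)]

lemma sN_adC_le (A X : Matrix (Fin n) (Fin n) ℂ) : sN (adC A X) ≤ 2 * sN A * sN X := by
  rw [adC_apply, sub_eq_add_neg]
  have h1 := sN_add_le (A * X) (-(X * A))
  rw [sN_neg] at h1
  have h2 := sN_mul_le A X
  have h3 := sN_mul_le X A
  nlinarith [sN_nonneg A, sN_nonneg X]

lemma sN_adC_pow_le (A X : Matrix (Fin n) (Fin n) ℂ) (p : ℕ) :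
    sN ((adC A ^ p) X) ≤ (2 * sN A) ^ p * sN X := by
  induction p with
  | zero => simp [ContinuousLinearMap.one_apply]
  | succ p ih =>
    rw [pow_succ', ContinuousLinearMap.mul_apply]
    calc sN (adC A ((adC A ^ p) X)) ≤ 2 * sN A * sN ((adC A ^ p) X) := sN_adC_le _ _
      _ ≤ 2 * sN A * ((2 * sN A) ^ p * sN X) := by
          have := sN_nonneg A
          nlinarith [sN_nonneg ((adC A ^ p) X)]
      _ = (2 * sN A) ^ (p + 1) * sN X := by rw [pow_succ']; ring

lemma summable_term (r : ℝ) (hr : 0 ≤ r) (A X : Matrix (Fin n) (Fin n) ℂ) :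
    Summable (fun p : ℕ =>
      r ^ (p + 1) / ((p + 1).factorial : ℝ) * sN ((adC A ^ (p + 1)) X)) := by
  have hbig : Summable (fun p : ℕ =>
      (r * (2 * sN A)) ^ (p + 1) / ((p + 1).factorial : ℝ) * sN X) := by
    have h0 : Summable (fun m : ℕ => (r * (2 * sN A)) ^ m / (m.factorial : ℝ)) :=
      Real.summable_pow_div_factorial _
    exact ((h0.comp_injective (add_left_injective 1)).mul_right (sN X))
  refine Summable.of_nonneg_of_le (fun p => ?_) (fun p => ?_) hbig
  · exact mul_nonneg (by positivity) (sN_nonneg _)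
  · have h1 := sN_adC_pow_le A X (p + 1)
    have h2 : (0:ℝ) ≤ r ^ (p + 1) / ((p + 1).factorial : ℝ) := by positivity
    calc r ^ (p + 1) / ((p + 1).factorial : ℝ) * sN ((adC A ^ (p + 1)) X)
        ≤ r ^ (p + 1) / ((p + 1).factorial : ℝ) * ((2 * sN A) ^ (p + 1) * sN X) :=
          mul_le_mul_of_nonneg_left h1 h2
      _ = (r * (2 * sN A)) ^ (p + 1) / ((p + 1).factorial : ℝ) * sN X := by
          rw [mul_pow]; ring

lemma sN_tsum_le (f : ℕ → Matrix (Fin n) (Fin n) ℂ) (hf : Summable f)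
    (hn : Summable fun p => sN (f p)) : sN (∑' p, f p) ≤ ∑' p, sN (f p) := by
  rw [sN_eq, (φL n).map_tsum hf]
  exact norm_tsum_le_tsum_norm hn

lemma smul_clm_pow (s : ℂ) (T : Matrix (Fin n) (Fin n) ℂ →L[ℂ] Matrix (Fin n) (Fin n) ℂ)
    (p : ℕ) : (s • T) ^ p = s ^ p • T ^ p := by
  induction p with
  | zero => simp
  | succ p ih =>
    ext X
    rw [pow_succ, pow_succ, ContinuousLinearMap.mul_apply, ih]
    simp only [ContinuousLinearMap.smul_apply, _root_.map_smul, ContinuousLinearMap.mul_apply,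
      smul_smul, pow_succ, mul_comm s]

set_option synthInstance.maxHeartbeats 20000 in
lemma sN_exp_sub_apply_le (s : ℂ) (A X : Matrix (Fin n) (Fin n) ℂ) :
    sN (exp (s • adC A) X - X) ≤
      ∑' p : ℕ, ‖s‖ ^ (p + 1) / ((p + 1).factorial : ℝ) * sN ((adC A ^ (p + 1)) X) := by
  set D := s • adC A with hD
  set f : ℕ → Matrix (Fin n) (Fin n) ℂ :=
    fun p => (p.factorial : ℂ)⁻¹ • (D ^ p) X with hfdef
  have hDsum : Summable (fun p : ℕ => (p.factorial : ℂ)⁻¹ • D ^ p) := by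
      have hCS := FiniteDimensional.complete ℂ (Matrix (Fin n) (Fin n) ℂ →L[ℂ] Matrix (Fin n) (Fin n) ℂ)
      letI : NormedRing (Matrix (Fin n) (Fin n) ℂ →L[ℂ] Matrix (Fin n) (Fin n) ℂ) :=
        ContinuousLinearMap.toNormedRing
      letI : NormedAlgebra ℂ (Matrix (Fin n) (Fin n) ℂ →L[ℂ] Matrix (Fin n) (Fin n) ℂ) :=
        ContinuousLinearMap.toNormedAlgebra
      letI : NormedAlgebra ℚ (Matrix (Fin n) (Fin n) ℂ →L[ℂ] Matrix (Fin n) (Fin n) ℂ) :=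
        NormedAlgebra.restrictScalars ℚ ℂ _
      exact @expSeries_summable' ℂ _ _ _ _ _ _ (by exact hCS) D
  have hfsum : Summable f := by
    have h := hDsum.map (AddMonoidHom.mk' (fun T : Matrix (Fin n) (Fin n) ℂ →L[ℂ] Matrix (Fin n) (Fin n) ℂ => T X) (fun _ _ => rfl))
      (continuous_eval_const X)
    simpa [hfdef, ContinuousLinearMap.smul_apply, Function.comp_def] using h
  have hexp : exp D X = ∑' p, f p := by
    rw [exp_eq_tsum (𝕂 := ℂ)]
    have h := ((hDsum.hasSum.map (AddMonoidHom.mk' (fun T : Matrix (Fin n) (Fin n) ℂ →L[ℂ] Matrix (Fin n) (Fin n) ℂ => T X) (fun _ _ => rfl))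
      (continuous_eval_const X)).tsum_eq).symm
    simpa [hfdef, ContinuousLinearMap.smul_apply, Function.comp_def] using h
  have hfval : ∀ p : ℕ, sN (f p) = ‖s‖ ^ p / (p.factorial : ℝ) * sN ((adC A ^ p) X) := by
    intro p
    have h1 : f p = ((p.factorial : ℂ)⁻¹ * s ^ p) • ((adC A ^ p) X) := by
      rw [hfdef]
      simp only [hD]
      rw [smul_clm_pow, ContinuousLinearMap.smul_apply, smul_smul]
    rw [h1, sN_smul, norm_mul, norm_inv, norm_pow]
    have : ‖(p.factorial : ℂ)‖ = (p.factorial : ℝ) := by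
      simpa using Complex.norm_natCast p.factorial
    rw [this, div_eq_mul_inv]; ring
  have key : exp D X - X = ∑' p, f (p + 1) := by
    rw [hexp, hfsum.tsum_eq_zero_add]
    have h0 : f 0 = X := by simp [hfdef, ContinuousLinearMap.one_apply]
    rw [h0, add_sub_cancel_left]
  rw [key]
  have hsum1 : Summable (fun p => f (p + 1)) := hfsum.comp_injective (add_left_injective 1)
  have hsum2 : Summable (fun p => sN (f (p + 1))) := by
    simp only [hfval]
    exact summable_term ‖s‖ (norm_nonneg s) A X
  calc sN (∑' p, f (p + 1)) ≤ ∑' p, sN (f (p + 1)) := sN_tsum_le _ hsum1 hsum2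
    _ = ∑' p : ℕ, ‖s‖ ^ (p + 1) / ((p + 1).factorial : ℝ) * sN ((adC A ^ (p + 1)) X) :=
      tsum_congr fun p => hfval (p + 1)

lemma step_bound (A : Matrix (Fin n) (Fin n) ℂ) (hA : Aᴴ = A) (e t εb : ℝ) (hεb : 0 ≤ εb)
    (he : |e| ≤ εb) (X : Matrix (Fin n) (Fin n) ℂ) :
    sN (exp ((-(Complex.I * (1 + e * t))) • adC A) X - exp ((-Complex.I) • adC A) X) ≤
      ∑' p : ℕ, (εb * |t|) ^ (p + 1) / ((p + 1).factorial : ℝ) *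
        sN ((adC A ^ (p + 1)) X) := by
  set sE : ℂ := -(Complex.I * ((e * t : ℝ) : ℂ)) with hsE
  have hsplit : ((-(Complex.I * (1 + e * t))) : ℂ) • adC A =
      (-Complex.I) • adC A + sE • adC A := by
    have h0 : ((-(Complex.I * (1 + e * t))) : ℂ) = (-Complex.I) + sE := by
      rw [hsE]; push_cast; ring
    rw [h0]
    ext Y : 1
    simp only [ContinuousLinearMap.add_apply, ContinuousLinearMap.smul_apply, add_smul]
  have hcomm : Commute ((-Complex.I : ℂ) • adC A) (sE • adC A) := by
    show _ * _ = _ * _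
    ext Y
    simp only [ContinuousLinearMap.mul_apply, ContinuousLinearMap.smul_apply, _root_.map_smul,
      smul_smul, mul_comm]
  have hAB : exp (((-(Complex.I * (1 + e * t))) : ℂ) • adC A) =
      exp ((-Complex.I) • adC A) * exp (sE • adC A) := by
    rw [hsplit]
    exact (by
        have hCS := FiniteDimensional.complete ℂ (Matrix (Fin n) (Fin n) ℂ →L[ℂ] Matrix (Fin n) (Fin n) ℂ)
        letI : NormedRing (Matrix (Fin n) (Fin n) ℂ →L[ℂ] Matrix (Fin n) (Fin n) ℂ) :=
          ContinuousLinearMap.toNormedRing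
        letI : NormedAlgebra ℂ (Matrix (Fin n) (Fin n) ℂ →L[ℂ] Matrix (Fin n) (Fin n) ℂ) :=
          ContinuousLinearMap.toNormedAlgebra
        letI : NormedAlgebra ℚ (Matrix (Fin n) (Fin n) ℂ →L[ℂ] Matrix (Fin n) (Fin n) ℂ) :=
          NormedAlgebra.restrictScalars ℚ ℂ _
        exact @NormedSpace.exp_add_of_commute _ _ _ (by exact hCS) _ _
          hcomm)
  rw [hAB, ContinuousLinearMap.mul_apply, ← map_sub]
  have h1 : sN (exp ((-Complex.I) • adC A) (exp (sE • adC A) X - X)) ≤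
      sN (exp (sE • adC A) X - X) := by
    have h := sN_exp_conj_le A hA 1 (exp (sE • adC A) X - X)
    simpa using h
  refine h1.trans ((sN_exp_sub_apply_le sE A X).trans ?_)
  have hnorm : ‖sE‖ ≤ εb * |t| := by
    rw [hsE, norm_neg]
    have : ‖Complex.I * ((e * t : ℝ) : ℂ)‖ = |e| * |t| := by
      simp [norm_mul, Complex.norm_real, Real.norm_eq_abs, abs_mul]
    rw [this]
    exact mul_le_mul_of_nonneg_right he (abs_nonneg t)
  refine Summable.tsum_le_tsum (fun p => ?_) (summable_term ‖sE‖ (norm_nonneg _) A X)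
    (summable_term (εb * |t|) (by positivity) A X)
  have hdiv : ‖sE‖ ^ (p + 1) / ((p + 1).factorial : ℝ) ≤
      (εb * |t|) ^ (p + 1) / ((p + 1).factorial : ℝ) := by
    gcongr
  exact mul_le_mul_of_nonneg_right hdiv (sN_nonneg _)

lemma sN_list_prod_apply_le (f : ℕ → (Matrix (Fin n) (Fin n) ℂ →L[ℂ] Matrix (Fin n) (Fin n) ℂ))
    (l : List ℕ) (hf : ∀ j ∈ l, ∀ X, sN (f j X) ≤ sN X) (X : Matrix (Fin n) (Fin n) ℂ) :
    sN (((l.map f).prod) X) ≤ sN X := by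
  induction l generalizing X with
  | nil => simp [ContinuousLinearMap.one_apply]
  | cons a l ih =>
    rw [List.map_cons, List.prod_cons, ContinuousLinearMap.mul_apply]
    exact (hf a (List.mem_cons_self) _).trans (ih (fun j hj => hf j (List.mem_cons_of_mem a hj)) X)

lemma main_induction (H : ℕ → Matrix (Fin n) (Fin n) ℂ) (hH : ∀ j, (H j)ᴴ = H j)
    (t εb : ℝ) (hεb : 0 ≤ εb) (ε : ℕ → ℝ) (hε : ∀ j, |ε j| ≤ εb) (m : ℕ) :
    ∀ X : Matrix (Fin n) (Fin n) ℂ,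
    sN (((((List.range m).map
          (fun j => exp ((-(Complex.I * (1 + ε j * t))) • adC (H j)))).prod) X) -
        ((((List.range m).map (fun j => exp ((-Complex.I) • adC (H j)))).prod) X)) ≤
      ∑' p : ℕ, (εb * |t|) ^ (p+1) / (Nat.factorial (p+1) : ℝ) *
        ∑ j ∈ Finset.range m,
          sN ((adC (H j) ^ (p+1))
            ((((List.range' (j+1) (m-(j+1))).map
              (fun i => exp ((-Complex.I) • adC (H i)))).prod) X)) := by
  set funA : ℕ → (Matrix (Fin n) (Fin n) ℂ →L[ℂ] Matrix (Fin n) (Fin n) ℂ) :=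
    fun j => exp ((-(Complex.I * (1 + ε j * t))) • adC (H j)) with hfunA
  set funB : ℕ → (Matrix (Fin n) (Fin n) ℂ →L[ℂ] Matrix (Fin n) (Fin n) ℂ) :=
    fun j => exp ((-Complex.I) • adC (H j)) with hfunB
  have hAiso : ∀ j, ∀ Y, sN (funA j Y) ≤ sN Y := by
    intro j Y
    have h := sN_exp_conj_le (H j) (hH j) (1 + ε j * t) Y
    have hcast : ((-(Complex.I * ((1 + ε j * t : ℝ) : ℂ))) : ℂ) =
        -(Complex.I * (1 + (ε j : ℂ) * (t : ℂ))) := by push_cast; ring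
    rw [hcast] at h
    exact h
  have hsummand : ∀ (A : Matrix (Fin n) (Fin n) ℂ) (Y : Matrix (Fin n) (Fin n) ℂ),
      Summable (fun p : ℕ => (εb * |t|) ^ (p+1) / (Nat.factorial (p+1) : ℝ) *
        sN ((adC A ^ (p+1)) Y)) := fun A Y => summable_term (εb * |t|) (by positivity) A Y
  induction m with
  | zero =>
    intro X
    have h0 : sN (0 : Matrix (Fin n) (Fin n) ℂ) = 0 := by
      simp [sN_eq]
    simp [h0]
  | succ m ih =>
    intro X
    have hPA : ((List.range (m+1)).map funA).prod = ((List.range m).map funA).prod * funA m := by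
      rw [List.range_succ, List.map_append, List.prod_append]; simp
    have hPB : ((List.range (m+1)).map funB).prod = ((List.range m).map funB).prod * funB m := by
      rw [List.range_succ, List.map_append, List.prod_append]; simp
    set PA := ((List.range m).map funA).prod with hPAdef
    set PB := ((List.range m).map funB).prod with hPBdef
    have e1 : ((List.range (m+1)).map funA).prod X - ((List.range (m+1)).map funB).prod X =
        PA (funA m X - funB m X) + (PA (funB m X) - PB (funB m X)) := by
      rw [hPA, hPB, ContinuousLinearMap.mul_apply, ContinuousLinearMap.mul_apply, map_sub]
      abel
    rw [e1]
    have t1 : sN (PA (funA m X - funB m X)) ≤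
        ∑' p : ℕ, (εb * |t|) ^ (p+1) / (Nat.factorial (p+1) : ℝ) *
          sN ((adC (H m) ^ (p+1)) X) := by
      refine (sN_list_prod_apply_le funA _ (fun j _ Y => hAiso j Y) _).trans ?_
      exact step_bound (H m) (hH m) (ε m) t εb hεb (hε m) X
    have t2 := ih (funB m X)
    have htail : ∀ j ∈ Finset.range m,
        (((List.range' (j+1) (m-(j+1))).map funB).prod) (funB m X) =
        (((List.range' (j+1) ((m+1)-(j+1))).map funB).prod) X := by
      intro j hj
      rw [Finset.mem_range] at hj
      have h2 : (m+1)-(j+1) = (m-(j+1)) + 1 := by omega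
      have h3 : List.range' (j+1) ((m-(j+1))+1) =
          List.range' (j+1) (m-(j+1)) ++ [(j+1)+(m-(j+1))] := by
        have := List.range'_concat (step := 1) (s := j+1) (n := m-(j+1)); simpa using this
      have h4 : (j+1)+(m-(j+1)) = m := by omega
      rw [h2, h3, h4, List.map_append, List.prod_append, List.map_singleton,
        List.prod_singleton, ContinuousLinearMap.mul_apply]
    have hre : (∑' p : ℕ, (εb * |t|) ^ (p+1) / (Nat.factorial (p+1) : ℝ) *
          ∑ j ∈ Finset.range m, sN ((adC (H j) ^ (p+1))
            ((((List.range' (j+1) (m-(j+1))).map funB).prod) (funB m X)))) =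
        ∑' p : ℕ, (εb * |t|) ^ (p+1) / (Nat.factorial (p+1) : ℝ) *
          ∑ j ∈ Finset.range m, sN ((adC (H j) ^ (p+1))
            ((((List.range' (j+1) ((m+1)-(j+1))).map funB).prod) X)) := by
      refine tsum_congr fun p => ?_
      exact congrArg (fun z => (εb * |t|) ^ (p+1) / (Nat.factorial (p+1) : ℝ) * z)
        (Finset.sum_congr rfl fun j hj => by rw [htail j hj])
    have hsum2' : Summable (fun p : ℕ => (εb * |t|) ^ (p+1) / (Nat.factorial (p+1) : ℝ) *
        ∑ j ∈ Finset.range m, sN ((adC (H j) ^ (p+1))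
          ((((List.range' (j+1) ((m+1)-(j+1))).map funB).prod) X))) := by
      simp only [Finset.mul_sum]
      exact summable_sum (fun j _ => hsummand (H j) _)
    have hlast : (((List.range' (m+1) ((m+1)-(m+1))).map funB).prod) X = X := by
      simp [ContinuousLinearMap.one_apply]
    calc sN (PA (funA m X - funB m X) + (PA (funB m X) - PB (funB m X)))
        ≤ sN (PA (funA m X - funB m X)) + sN (PA (funB m X) - PB (funB m X)) := sN_add_le _ _
      _ ≤ (∑' p : ℕ, (εb * |t|) ^ (p+1) / (Nat.factorial (p+1) : ℝ) *
              sN ((adC (H m) ^ (p+1)) X)) +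
          ∑' p : ℕ, (εb * |t|) ^ (p+1) / (Nat.factorial (p+1) : ℝ) *
            ∑ j ∈ Finset.range m, sN ((adC (H j) ^ (p+1))
              ((((List.range' (j+1) ((m+1)-(j+1))).map funB).prod) X)) :=
          add_le_add t1 (t2.trans_eq hre)
      _ = ∑' p : ℕ, (εb * |t|) ^ (p+1) / (Nat.factorial (p+1) : ℝ) *
            ∑ j ∈ Finset.range (m+1), sN ((adC (H j) ^ (p+1))
              ((((List.range' (j+1) ((m+1)-(j+1))).map funB).prod) X)) := by
          rw [← Summable.tsum_add (hsummand (H m) X) hsum2']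
          refine tsum_congr fun p => ?_
          rw [Finset.sum_range_succ, hlast]
          ring

end StmtFiveAux

/-- Inductive estimate (Appendix B), 0-indexed: the perturbed iterated adjoint
exponential applied to `H_{k-1}` differs from the ideal one by at most the stated series. -/
theorem stmt_5 (n k : ℕ) (hk : 2 ≤ k) (H : ℕ → Matrix (Fin n) (Fin n) ℂ)
    (hH : ∀ j, (H j)ᴴ = H j) (t εb : ℝ) (hεb : 0 ≤ εb) (ε : ℕ → ℝ)
    (hε : ∀ j, |ε j| ≤ εb) :
    sN (((((List.range (k-1)).map
          (fun j => NormedSpace.exp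
            ((-(Complex.I * (1 + ε j * t))) • adC (H j)))).prod) (H (k-1))) -
        ((((List.range (k-1)).map
          (fun j => NormedSpace.exp ((-Complex.I) • adC (H j)))).prod) (H (k-1)))) ≤
      ∑' p : ℕ, (εb * |t|) ^ (p+1) / (Nat.factorial (p+1) : ℝ) *
        ∑ j ∈ Finset.range (k-1),
          sN ((adC (H j) ^ (p+1))
            ((((List.range' (j+1) (k-1-(j+1))).map
              (fun m => NormedSpace.exp ((-Complex.I) • adC (H m)))).prod) (H (k-1)))) :=
  StmtFiveAux.main_induction H hH t εb hεb ε hε (k-1) (H (k-1))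
end

section
/- Let H₁,…,H_N be self-adjoint complex n×n matrices and for t ∈ ℝ define ψ(t) = e^{−i(1+t)H₁}⋯e^{−i(1+t)H_N} ψ₀ for a fixed ψ₀ ∈ ℂⁿ. Then ψ is differentiable and satisfies the ODE ψ'(t) = −i ℋ(t) ψ(t), where ℋ(t) = H₁ + e^{−i(1+t)ad H₁}(H₂) + ⋯ + e^{−i(1+t)ad H₁}⋯e^{−i(1+t)ad H_{N−1}}(H_N). -/
/-!
Write `U(z) = e^{z H₀} ⋯ e^{z H_{N-1}}`. By the product rule, `U'(z)` is a sum of terms in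
which `H_k` stands right after the first `k + 1` factors; commuting it with `e^{z H_k}` and then
moving it to the front past `P = e^{z H₀} ⋯ e^{z H_{k-1}}` turns it into
`(e^{z ad H₀} ⋯ e^{z ad H_{k-1}} H_k) P`. This iterated Hadamard formula reduces to
`e^{ad a} x = e^a x e^{-a}`, which holds because `ad a = L_a - R_a` with commuting left and right
multiplications, and `L`, `R` are continuous ring homomorphisms out of `𝔸` and `𝔸ᵐᵒᵖ`, hence
commute with `exp`. The theorem is the chain rule for `z = -i(1 + t)`, followed by evaluation
at `ψ₀`.
-/

open Matrix

attribute [local instance] Matrix.linftyOpNormedAddCommGroup Matrix.linftyOpNormedSpace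
  Matrix.linftyOpNormedRing Matrix.linftyOpNormedAlgebra

open NormedSpace ContinuousLinearMap

namespace ContinuousLinearMap

variable (𝕂 : Type*) {𝔸 : Type*} [RCLike 𝕂] [NormedRing 𝔸] [NormedAlgebra 𝕂 𝔸]

noncomputable def mulLeftRingHom : 𝔸 →+* (𝔸 →L[𝕂] 𝔸) where
  toFun := mul 𝕂 𝔸
  map_one' := by ext; simp
  map_mul' a b := by ext; simp [mul_assoc]
  map_zero' := by simp
  map_add' := by simp

noncomputable def mulRightRingHom : 𝔸ᵐᵒᵖ →+* (𝔸 →L[𝕂] 𝔸) where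
  toFun b := (mul 𝕂 𝔸).flip b.unop
  map_one' := by ext; simp
  map_mul' a b := by ext; simp [mul_assoc]
  map_zero' := by simp
  map_add' := by simp

noncomputable def ad : 𝔸 →L[𝕂] 𝔸 →L[𝕂] 𝔸 := mul 𝕂 𝔸 - (mul 𝕂 𝔸).flip

variable [CompleteSpace 𝔸]

theorem exp_mul_eq_mul_exp (a : 𝔸) : exp (mul 𝕂 𝔸 a) = mul 𝕂 𝔸 (exp a) := by
  let _ := NormedAlgebra.restrictScalars ℚ 𝕂 𝔸
  let _ := NormedAlgebra.restrictScalars ℚ 𝕂 (𝔸 →L[𝕂] 𝔸)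
  exact (map_exp (mulLeftRingHom 𝕂) (mul 𝕂 𝔸).continuous a).symm

theorem exp_flip_mul_eq_flip_mul_exp (a : 𝔸) :
    exp ((mul 𝕂 𝔸).flip a) = (mul 𝕂 𝔸).flip (exp a) := by
  let _ := NormedAlgebra.restrictScalars ℚ 𝕂 𝔸
  let _ := NormedAlgebra.restrictScalars ℚ 𝕂 (𝔸 →L[𝕂] 𝔸)
  have h := map_exp (mulRightRingHom 𝕂)
    ((mul 𝕂 𝔸).flip.continuous.comp MulOpposite.continuous_unop) (MulOpposite.op a)
  rw [exp_op] at h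
  exact h.symm

theorem exp_ad_apply (a x : 𝔸) : exp (ad 𝕂 a) x = exp a * x * exp (-a) := by
  let _ := NormedAlgebra.restrictScalars ℚ 𝕂 (𝔸 →L[𝕂] 𝔸)
  have hcomm : Commute (mul 𝕂 𝔸 a) (-(mul 𝕂 𝔸).flip a) := by
    refine Commute.neg_right ?_
    ext y
    simp [mul_assoc]
  rw [ad, _root_.sub_apply, sub_eq_add_neg, exp_add_of_commute hcomm, ← map_neg,
    mul_apply_eq_comp, exp_mul_eq_mul_exp, exp_flip_mul_eq_flip_mul_exp]
  simp [mul_assoc]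

end ContinuousLinearMap

section ExpProd

variable (𝕂 : Type*) {𝔸 : Type*} [RCLike 𝕂] [NormedRing 𝔸] [NormedAlgebra 𝕂 𝔸]

noncomputable def expProd (H : ℕ → 𝔸) (z : 𝕂) (N : ℕ) : 𝔸 :=
  ((List.range N).map fun j => exp (z • H j)).prod

noncomputable def expAdProd (H : ℕ → 𝔸) (z : 𝕂) (k : ℕ) : 𝔸 →L[𝕂] 𝔸 :=
  ((List.range k).map fun j => exp (z • ad 𝕂 (H j))).prod

variable {𝕂}

theorem expProd_succ (H : ℕ → 𝔸) (z : 𝕂) (N : ℕ) :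
    expProd 𝕂 H z (N + 1) = expProd 𝕂 H z N * exp (z • H N) := by
  simp [expProd, List.range_succ]

theorem expAdProd_succ_apply (H : ℕ → 𝔸) (z : 𝕂) (k : ℕ) (x : 𝔸) :
    expAdProd 𝕂 H z (k + 1) x = expAdProd 𝕂 H z k (exp (ad 𝕂 (z • H k)) x) := by
  simp [expAdProd, List.range_succ, mul_apply_eq_comp]

variable [CompleteSpace 𝔸]

theorem expAdProd_apply_mul_expProd (H : ℕ → 𝔸) (z : 𝕂) (k : ℕ) (x : 𝔸) :
    expAdProd 𝕂 H z k x * expProd 𝕂 H z k = expProd 𝕂 H z k * x := by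
  induction k generalizing x with
  | zero => simp [expAdProd, expProd]
  | succ k ih =>
    let _ := NormedAlgebra.restrictScalars ℚ 𝕂 𝔸
    have hinv : exp (-(z • H k)) * exp (z • H k) = 1 := by
      rw [← NormedSpace.exp_add_of_commute (Commute.neg_left (Commute.refl _)), neg_add_cancel,
        exp_zero]
    rw [expAdProd_succ_apply, expProd_succ, ← mul_assoc, ih, exp_ad_apply]
    simp only [mul_assoc, hinv, mul_one]

theorem hasDerivAt_expProd (H : ℕ → 𝔸) (z : 𝕂) (N : ℕ) :
    HasDerivAt (fun w => expProd 𝕂 H w N)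
      ((∑ k ∈ Finset.range N, expAdProd 𝕂 H z k (H k)) * expProd 𝕂 H z N) z := by
  induction N with
  | zero => simpa [expProd] using hasDerivAt_const z (1 : 𝔸)
  | succ N ih =>
    simp_rw [expProd_succ]
    refine (ih.mul (hasDerivAt_exp_smul_const (H N) z)).congr_deriv ?_
    have hcomm : expProd 𝕂 H z N * (exp (z • H N) * H N) =
        expAdProd 𝕂 H z N (H N) * (expProd 𝕂 H z N * exp (z • H N)) := by
      rw [((Commute.refl (H N)).smul_left z).exp_left.eq, ← mul_assoc,
        ← expAdProd_apply_mul_expProd H z N (H N), mul_assoc]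
    rw [Finset.sum_range_succ, add_mul, mul_assoc, hcomm]

end ExpProd

theorem adC_eq_ad {n : ℕ} (A : Matrix (Fin n) (Fin n) ℂ) : adC A = ad ℂ A := rfl

theorem stmt_18_general (n N : ℕ) (H : ℕ → Matrix (Fin n) (Fin n) ℂ)
    (ψ₀ : EuclideanSpace ℂ (Fin n)) (t : ℝ) :
    HasDerivAt
      (fun s : ℝ => Matrix.toEuclideanCLM (𝕜 := ℂ)
        (((List.range N).map
          (fun j => NormedSpace.exp ((-(Complex.I * (1 + s))) • H j))).prod) ψ₀)
      ((-Complex.I) • (Matrix.toEuclideanCLM (𝕜 := ℂ)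
          (∑ k ∈ Finset.range N,
            (((List.range k).map
              (fun j => @NormedSpace.exp _ _ _ (@NonUnitalSeminormedRing.toIsTopologicalRing _
                  (@NormedRing.toSeminormedRing _ ContinuousLinearMap.toNormedRing).toNonUnitalSeminormedRing)
                ((-(Complex.I * (1 + t))) • adC (H j)))).prod) (H k)))
        (Matrix.toEuclideanCLM (𝕜 := ℂ)
          (((List.range N).map
            (fun j => NormedSpace.exp ((-(Complex.I * (1 + t))) • H j))).prod) ψ₀)) t := by
  have hc : HasDerivAt (fun s : ℝ => -(Complex.I * (1 + s))) (-Complex.I) t :=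
    (((hasDerivAt_id t).ofReal_comp.const_add 1).const_mul Complex.I).neg.congr_deriv (by simp)
  have hU := (hasDerivAt_expProd H _ N).scomp t hc
  let L : Matrix (Fin n) (Fin n) ℂ →L[ℂ] EuclideanSpace ℂ (Fin n) :=
    (apply ℂ _ ψ₀).comp
      (Matrix.toEuclideanCLM (𝕜 := ℂ)).toAlgEquiv.toLinearMap.toContinuousLinearMap
  have hψ := (L.restrictScalars ℝ).hasFDerivAt.comp_hasDerivAt t hU
  refine hψ.congr_deriv ?_
  change Matrix.toEuclideanCLM (𝕜 := ℂ) _ ψ₀ = _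
  rw [map_smul, map_mul]
  simp only [expProd, expAdProd, adC_eq_ad, _root_.smul_apply, mul_apply_eq_comp]
  -- the sides differ only in the `IsTopologicalRing` instance written out in the statement
  rfl

/-- The perturbed state `ψ(t) = e^{−i(1+t)H₀}⋯e^{−i(1+t)H_{N-1}} ψ₀` satisfies
`ψ'(t) = −i ℋ(t) ψ(t)` with
`ℋ(t) = Σ_k e^{−i(1+t)ad H₀}⋯e^{−i(1+t)ad H_{k-1}}(H_k)` (0-indexed). -/
theorem stmt_18 (n N : ℕ) (H : ℕ → Matrix (Fin n) (Fin n) ℂ) (hH : ∀ j, (H j)ᴴ = H j)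
    (ψ₀ : EuclideanSpace ℂ (Fin n)) (t : ℝ) :
    HasDerivAt
      (fun s : ℝ => Matrix.toEuclideanCLM (𝕜 := ℂ)
        (((List.range N).map
          (fun j => NormedSpace.exp ((-(Complex.I * (1 + s))) • H j))).prod) ψ₀)
      ((-Complex.I) • (Matrix.toEuclideanCLM (𝕜 := ℂ)
          (∑ k ∈ Finset.range N,
            (((List.range k).map
              (fun j => @NormedSpace.exp _ _ _ (@NonUnitalSeminormedRing.toIsTopologicalRing _
                  (@NormedRing.toSeminormedRing _ ContinuousLinearMap.toNormedRing).toNonUnitalSeminormedRing)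
                ((-(Complex.I * (1 + t))) • adC (H j)))).prod) (H k)))
        (Matrix.toEuclideanCLM (𝕜 := ℂ)
          (((List.range N).map
            (fun j => NormedSpace.exp ((-(Complex.I * (1 + t))) • H j))).prod) ψ₀)) t :=
  stmt_18_general n N H ψ₀ t
end
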